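/- arXiv:2009.08431 — 3 statements merged into one kernel-verified Lean document; each statement's English description precedes it below -/
import Mathlib

section
/- For fixed real z > 1, the limit as α → 0⁺ of (1/α)·(arctan(√(z² - α²)/α) - arctan(√(1 - α²)/α)) equals 1 - 1/z. -/
/-! For `c, x > 0` one has `arctan (√(c² - x²) / x) = arccos (x / c)` (beyond `x = c` both sides
are `0`). The expression is therefore the difference quotient at `0` of
`x ↦ arccos (x / z) - arccos x`, whose derivative there is `1 - 1 / z`. -/

open Real Filter Topology

theorem arctan_sqrt_sq_sub_sq_div {c x : ℝ} (hc : 0 < c) (hx : 0 < x) :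
    arctan (√(c ^ 2 - x ^ 2) / x) = arccos (x / c) := by
  rw [arccos_eq_arctan (div_pos hx hc)]
  congr 1
  have hsqrt : √(c ^ 2 - x ^ 2) = c * √(1 - (x / c) ^ 2) := by
    rw [← sqrt_sq hc.le, ← sqrt_mul (sq_nonneg c), sqrt_sq hc.le]
    congr 1
    field_simp
  rw [hsqrt]
  field_simp

theorem hasDerivAt_arccos_div_const_zero (c : ℝ) :
    HasDerivAt (fun x => arccos (x / c)) (-(1 / c)) 0 := by
  have harccos : HasDerivAt arccos (-1) (0 / c) := by
    simpa using hasDerivAt_arccos (x := 0) (by norm_num) (by norm_num)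
  simpa [Function.comp_def] using harccos.comp 0 ((hasDerivAt_id 0).div_const c)

theorem tendsto_arctan_sqrt_sq_sub_sq_div_sub {a b : ℝ} (ha : 0 < a) (hb : 0 < b) :
    Tendsto (fun x => (1 / x) *
        (arctan (√(a ^ 2 - x ^ 2) / x) - arctan (√(b ^ 2 - x ^ 2) / x)))
      (𝓝[>] 0) (𝓝 (1 / b - 1 / a)) := by
  have hderiv := (hasDerivAt_arccos_div_const_zero a).sub (hasDerivAt_arccos_div_const_zero b)
  have hslope := (hasDerivAt_iff_tendsto_slope.1 hderiv).mono_left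
    (nhdsWithin_mono 0 fun x (hx : 0 < x) => hx.ne')
  rw [neg_sub_neg] at hslope
  refine hslope.congr' ?_
  filter_upwards [self_mem_nhdsWithin] with x (hx : 0 < x)
  rw [arctan_sqrt_sq_sub_sq_div ha hx, arctan_sqrt_sq_sub_sq_div hb hx, slope_def_field]
  simp [div_eq_inv_mul]

theorem kahanian_arccot_limit (z : ℝ) (hz : 1 < z) :
    Tendsto (fun α : ℝ => (1 / α) *
        (Real.arctan (Real.sqrt (z ^ 2 - α ^ 2) / α) -
          Real.arctan (Real.sqrt (1 - α ^ 2) / α)))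
      (nhdsWithin 0 {a | 0 < a}) (nhds (1 - 1 / z)) := by
  have h := tendsto_arctan_sqrt_sq_sub_sq_div_sub (zero_lt_one.trans hz) zero_lt_one
  rw [one_pow, div_one] at h
  exact h
end

section
/- Let α > 0, α ≠ 1, σ ≠ 0, and fix real z. The limit as λ → -σ (λ ∉ {-σ}) of the Kahanian antiderivative -(λ-σ)²/(2λσ(λ+σ) ln α) + (1/(2 ln α))·(α^(2λz)/λ + α^(2σz)/σ - 4α^((λ+σ)z)/(λ+σ)) equals (1/(2σ ln α))·(α^(2σz) - α^(-2σz)) - 2z. -/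
/-!
Since `(l - σ)² = (l + σ)² - 4lσ`, the expression splits into a part that is continuous at
`l = -σ` and `-(2 / ln α)` times the difference quotient `(α^((l+σ)z) - 1) / (l + σ)` of
`l ↦ α^((l+σ)z)` at `-σ`, which tends to the derivative `z ln α`.
-/

open Real Filter Topology

theorem hasDerivAt_rpow_add_mul {α : ℝ} (hα : 0 < α) (σ z : ℝ) :
    HasDerivAt (fun l : ℝ => α ^ ((l + σ) * z)) (z * log α) (-σ) := by
  convert (((hasDerivAt_id' (-σ)).add_const σ).mul_const z).const_rpow hα using 1
  rw [neg_add_cancel, zero_mul, rpow_zero]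
  ring

theorem tendsto_rpow_add_mul_sub_one_div {α : ℝ} (hα : 0 < α) (σ z : ℝ) :
    Tendsto (fun l : ℝ => (α ^ ((l + σ) * z) - 1) / (l + σ)) (𝓝[≠] (-σ)) (𝓝 (z * log α)) := by
  convert hasDerivAt_iff_tendsto_slope.mp (hasDerivAt_rpow_add_mul hα σ z) using 2 with l
  simp [slope_def_field]

theorem kahanian_eq_of_ne {l σ L A B C : ℝ} (hl : l ≠ 0) (hσ : σ ≠ 0) (hlσ : l + σ ≠ 0)
    (hL : L ≠ 0) :
    -(l - σ) ^ 2 / (2 * l * σ * (l + σ) * L) + (1 / (2 * L)) * (A / l + B / σ - 4 * C / (l + σ)) =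
      (-(l + σ) / (2 * l * σ * L) + (1 / (2 * L)) * (A / l + B / σ)) -
        2 / L * ((C - 1) / (l + σ)) := by
  field_simp
  ring

theorem continuousAt_kahanian_regular_part {α : ℝ} (hα : 0 < α) {σ : ℝ} (hσ : σ ≠ 0) (z L : ℝ)
    (hL : L ≠ 0) :
    ContinuousAt (fun l : ℝ => -(l + σ) / (2 * l * σ * L) +
      (1 / (2 * L)) * (α ^ (2 * l * z) / l + α ^ (2 * σ * z) / σ)) (-σ) := by
  have hσ' : -σ ≠ 0 := neg_ne_zero.mpr hσ
  refine .add (.div (by fun_prop) (by fun_prop) (by simp [hσ, hL])) (.mul continuousAt_const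
    (.add (.div ?_ continuousAt_id hσ') continuousAt_const))
  exact (continuousAt_const_rpow hα.ne').comp (by fun_prop)

theorem kahanian_limit_lambda_to_neg_sigma (α σ z : ℝ) (hα : 0 < α) (hα1 : α ≠ 1)
    (hσ : σ ≠ 0) :
    Tendsto (fun l : ℝ =>
        -(l - σ) ^ 2 / (2 * l * σ * (l + σ) * Real.log α) +
          (1 / (2 * Real.log α)) *
            (α ^ (2 * l * z) / l + α ^ (2 * σ * z) / σ - 4 * α ^ ((l + σ) * z) / (l + σ)))
      (nhdsWithin (-σ) {l | l ≠ -σ})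
      (nhds ((1 / (2 * σ * Real.log α)) * (α ^ (2 * σ * z) - α ^ (-(2 * σ * z))) - 2 * z)) := by
  have hL : log α ≠ 0 := log_ne_zero_of_pos_of_ne_one hα hα1
  have hlim := ((continuousAt_kahanian_regular_part hα hσ z _ hL).tendsto.mono_left
    nhdsWithin_le_nhds).sub ((tendsto_rpow_add_mul_sub_one_div hα σ z).const_mul (2 / log α))
  have hval : -(-σ + σ) / (2 * -σ * σ * log α) +
      1 / (2 * log α) * (α ^ (2 * -σ * z) / -σ + α ^ (2 * σ * z) / σ) - 2 / log α * (z * log α) =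
      (1 / (2 * σ * log α)) * (α ^ (2 * σ * z) - α ^ (-(2 * σ * z))) - 2 * z := by
    rw [show 2 * -σ * z = -(2 * σ * z) by ring]
    field_simp
    ring
  rw [hval] at hlim
  refine hlim.congr' ?_
  filter_upwards [nhdsWithin_le_nhds (eventually_ne_nhds (neg_ne_zero.mpr hσ)),
    self_mem_nhdsWithin] with l hl hlσ
  exact (kahanian_eq_of_ne hl hσ (fun h => hlσ (eq_neg_of_add_eq_zero_left h)) hL).symm
end

section
/- Let α > 0, α ≠ 1, λ ≠ 0, and fix real z. The limit as σ → 0 (σ ≠ 0, σ ≠ -λ) of -(λ-σ)²/(2λσ(λ+σ) ln α) + (1/(2 ln α))·(α^(2λz)/λ + α^(2σz)/σ - 4α^((λ+σ)z)/(λ+σ)) equals z + (1/(2λ ln α))·(α^(2λz) - 4α^(λz) + 3). -/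
/-!
Writing `(λ - σ)² = λ(λ + σ) - 3λσ + σ²` splits off the pole `-1/(2σ ln α)` of the first term,
which pairs with `α^(2σz)/(2σ ln α)` into the difference quotient `(α^(2σz) - 1)/(2σ ln α)`.
That quotient tends to `z`, and everything left is continuous at `σ = 0`.
-/

open Real Filter Topology

theorem tendsto_rpow_mul_sub_one_div {α : ℝ} (hα : 0 < α) (c : ℝ) :
    Tendsto (fun t : ℝ => (α ^ (c * t) - 1) / t) (𝓝[≠] 0) (𝓝 (c * log α)) := by
  have hderiv : HasDerivAt (fun t : ℝ => α ^ (c * t)) (c * log α) 0 := by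
    simpa [mul_comm] using ((hasDerivAt_id (0 : ℝ)).const_mul c).const_rpow hα
  refine hderiv.tendsto_slope_zero.congr fun t => ?_
  simp [div_eq_inv_mul]

theorem kahanian_eq_difference_quotient_add {lam σ : ℝ} (hlam : lam ≠ 0) (hσ : σ ≠ 0)
    (hlamσ : lam + σ ≠ 0) (L A B E : ℝ) :
    -(lam - σ) ^ 2 / (2 * lam * σ * (lam + σ) * L) +
        (1 / (2 * L)) * (A / lam + E / σ - 4 * B / (lam + σ)) =
      (1 / (2 * L)) *
        ((E - 1) / σ + ((3 * lam - σ) / (lam * (lam + σ)) + A / lam - 4 * B / (lam + σ))) := by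
  field_simp
  ring

theorem kahanian_limit_sigma_to_zero (α lam z : ℝ) (hα : 0 < α) (hα1 : α ≠ 1)
    (hlam : lam ≠ 0) :
    Tendsto (fun σ : ℝ =>
        -(lam - σ) ^ 2 / (2 * lam * σ * (lam + σ) * Real.log α) +
          (1 / (2 * Real.log α)) *
            (α ^ (2 * lam * z) / lam + α ^ (2 * σ * z) / σ - 4 * α ^ ((lam + σ) * z) / (lam + σ)))
      (nhdsWithin 0 {σ : ℝ | σ ≠ 0 ∧ σ ≠ -lam})
      (nhds (z + (1 / (2 * lam * Real.log α)) *
        (α ^ (2 * lam * z) - 4 * α ^ (lam * z) + 3))) := by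
  have hL : log α ≠ 0 := log_ne_zero_of_pos_of_ne_one hα hα1
  have hquot := (tendsto_rpow_mul_sub_one_div hα (2 * z)).mono_left
    (nhdsWithin_mono 0 fun σ (hσ : σ ≠ 0 ∧ σ ≠ -lam) => hσ.1)
  have hregular : ContinuousAt (fun σ : ℝ => (3 * lam - σ) / (lam * (lam + σ)) +
      α ^ (2 * lam * z) / lam - 4 * α ^ ((lam + σ) * z) / (lam + σ)) 0 := by
    fun_prop (disch := simp [hlam, hα.ne'])
  have hlim := (hquot.add (hregular.tendsto.mono_left nhdsWithin_le_nhds)).const_mul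
    (1 / (2 * log α))
  have hvalue : 1 / (2 * log α) * (2 * z * log α + ((3 * lam - 0) / (lam * (lam + 0)) +
      α ^ (2 * lam * z) / lam - 4 * α ^ ((lam + 0) * z) / (lam + 0))) =
      z + 1 / (2 * lam * log α) * (α ^ (2 * lam * z) - 4 * α ^ (lam * z) + 3) := by
    simp only [sub_zero, add_zero]
    field_simp
    ring
  rw [hvalue] at hlim
  refine hlim.congr' ?_
  filter_upwards [self_mem_nhdsWithin] with σ ⟨hσ, hσlam⟩
  rw [kahanian_eq_difference_quotient_add hlam hσ (by grind), mul_right_comm 2 σ z]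
end
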